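/- For any d ≥ 0 and a ≥ 0 there is an isomorphism of FI-modules B_a M(d) ≅ M(a + d) over any commutative ring R. Consequently, if an FI-module V is finitely generated (respectively, generated in degree ≤ d), then B_a V is finitely generated (respectively, generated in degree ≤ a + d). -/

import Mathlib

open CategoryTheory

/-- The category FI: objects are finite sets, morphisms are injections. -/
structure FI : Type 1 where
  carrier : Type
  [fintype : Fintype carrier]
  [decEq : DecidableEq carrier]

namespace FI

instance : CoeSort FI Type := ⟨FI.carrier⟩
attribute [instance] FI.fintype FI.decEq

/-- Build an object of `FI` from a finite type. -/
def of (X : Type) [Fintype X] [DecidableEq X] : FI := ⟨X⟩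

instance : Category FI where
  Hom S T := {f : S.carrier → T.carrier // Function.Injective f}
  id S := ⟨id, fun _ _ h => h⟩
  comp f g := ⟨g.1 ∘ f.1, fun _ _ h => f.2 (g.2 h)⟩
  id_comp _ := rfl
  comp_id _ := rfl
  assoc _ _ _ := rfl

/-- The standard object `[n] = {1, …, n}` of `FI`. -/
def obj' (n : ℕ) : FI := FI.of (Fin n)

end FI

variable {R : Type} [CommRing R]

/-- A sub-FI-module of an FI-module `V` : a collection of submodules compatible
with all the induced maps. -/
structure SubFIModule (V : FI ⥤ ModuleCat R) where
  carrier : ∀ S : FI, Submodule R (V.obj S)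
  map_mem : ∀ {S T : FI} (f : S ⟶ T) (v : V.obj S), v ∈ carrier S → V.map f v ∈ carrier T

/-- An FI-module is finitely generated if finitely many elements are contained in
no proper sub-FI-module. -/
def FIModuleFG (V : FI ⥤ ModuleCat R) : Prop :=
  ∃ (k : ℕ) (n : Fin k → ℕ) (v : ∀ i, V.obj (FI.obj' (n i))),
    ∀ W : SubFIModule V, (∀ i, v i ∈ W.carrier (FI.obj' (n i))) → ∀ S, W.carrier S = ⊤

/-- An FI-module is generated in degree ≤ d if some set of elements of degrees ≤ d
is contained in no proper sub-FI-module. -/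
def FIModuleGenLE (V : FI ⥤ ModuleCat R) (d : ℕ) : Prop :=
  ∃ (ι : Type) (n : ι → ℕ) (_ : ∀ i, n i ≤ d) (v : ∀ i, V.obj (FI.obj' (n i))),
    ∀ W : SubFIModule V, (∀ i, v i ∈ W.carrier (FI.obj' (n i))) → ∀ S, W.carrier S = ⊤

/-- The free FI-module `⊕_{i ∈ ι} M(d_i)` over `R`: it assigns to a finite set `S` the free
`R`-module on the disjoint union over `i ∈ ι` of the sets of injections `[d_i] ↪ S`, with
maps induced by postcomposition. Taking `ι` a one-element set gives the FI-module
`M(d) = R[Hom_FI([d], −)]`. -/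
noncomputable def FreeFIModule (R : Type) [CommRing R] (ι : Type) (ds : ι → ℕ) :
    FI ⥤ ModuleCat R where
  obj S := ModuleCat.of R ((Σ i : ι, (FI.obj' (ds i) ⟶ S)) →₀ R)
  map {S T} g := ModuleCat.ofHom (Finsupp.lmapDomain R R
    (fun p => (⟨p.1, p.2 ≫ g⟩ : Σ i : ι, (FI.obj' (ds i) ⟶ T))))
  map_id := by
    intro S
    exact ModuleCat.hom_ext (Finsupp.lmapDomain_id R R)
  map_comp := by
    intro S T U f g
    exact ModuleCat.hom_ext <| Finsupp.lmapDomain_comp R R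
      (fun p : Σ i : ι, (FI.obj' (ds i) ⟶ S) => (⟨p.1, p.2 ≫ f⟩ : Σ i : ι, (FI.obj' (ds i) ⟶ T)))
      (fun p : Σ i : ι, (FI.obj' (ds i) ⟶ T) => (⟨p.1, p.2 ≫ g⟩ : Σ i : ι, (FI.obj' (ds i) ⟶ U)))

open DirectSum

instance (S T : FI) : DecidableEq (S ⟶ T) :=
  fun f g => decidable_of_iff (f.1 = g.1) (by exact Subtype.ext_iff.symm)

/-- The complement `S − f([a])` of the image of an injection `f : [a] ↪ S`, as an object
of `FI`. -/
def BComplement {a : ℕ} {S : FI} (f : FI.obj' a ⟶ S) : FI :=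
  FI.of {s : S.carrier // ∀ x, f.1 x ≠ s}

/-- The restriction of `g : S ↪ T` to a map `S − f([a]) ↪ T − (g∘f)([a])`. -/
def BRestrict {a : ℕ} {S T : FI} (g : S ⟶ T) (f : FI.obj' a ⟶ S) :
    BComplement f ⟶ BComplement (f ≫ g) :=
  ⟨fun s => ⟨g.1 s.1, fun x h => s.2 x (g.2 h)⟩, by
    intro s t h
    apply Subtype.ext
    exact g.2 (congrArg Subtype.val h)⟩

/-- The ordered negative shift `B_a V` of an FI-module `V`:
`(B_a V)_S = ⊕_{f : [a] ↪ S} V_{S − f([a])}`, an injection `g : S ↪ T` sending the summand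
indexed by `f` to the summand indexed by `g ∘ f` via the restriction of `g`. -/
noncomputable def BFunctor (R : Type) [CommRing R] (a : ℕ) (V : FI ⥤ ModuleCat R) :
    FI ⥤ ModuleCat R where
  obj S := ModuleCat.of R (⨁ f : (FI.obj' a ⟶ S), V.obj (BComplement f))
  map {S T} g :=
    ModuleCat.ofHom <| DirectSum.toModule R (FI.obj' a ⟶ S) _ fun f =>
      (DirectSum.lof R (FI.obj' a ⟶ T) (fun f' => V.obj (BComplement f')) (f ≫ g)).comp
        (V.map (BRestrict g f)).hom
  map_id := by
    intro S
    refine ModuleCat.hom_ext (DirectSum.linearMap_ext R fun f => ?_)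
    ext x
    simp only [ModuleCat.hom_ofHom, ModuleCat.hom_id, ModuleCat.hom_comp, LinearMap.id_coe, id_eq,
      LinearMap.coe_comp, Function.comp_apply, DirectSum.toModule_lof]
    rw [show BRestrict (𝟙 S) f = 𝟙 (BComplement f) from rfl, V.map_id]
    rfl
  map_comp := by
    intro S T U g h
    refine ModuleCat.hom_ext (DirectSum.linearMap_ext R fun f => ?_)
    ext x
    simp only [ModuleCat.hom_ofHom, ModuleCat.hom_id, ModuleCat.hom_comp, LinearMap.id_coe, id_eq,
      LinearMap.coe_comp, Function.comp_apply, DirectSum.toModule_lof]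
    rw [show BRestrict (g ≫ h) f = BRestrict g f ≫ BRestrict h (f ≫ g) from rfl,
      V.map_comp]
    simp only [ModuleCat.hom_comp, LinearMap.coe_comp, Function.comp_apply, DirectSum.toModule_lof]
    rfl

/-- The FI-module `M(d) = R[Hom_FI([d], −)]`. -/
noncomputable def MFI (R : Type) [CommRing R] (d : ℕ) : FI ⥤ ModuleCat R :=
  FreeFIModule R PUnit (fun _ => d)

/-!
An injection `[a + d] ↪ S` is the same thing as an injection `f : [a] ↪ S` together with an
injection `[d] ↪ S − f([a])` (split `Fin (a + d)` with `Fin.append`), naturally in `S`; applying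
`R[-]` gives `B_a M(d) ≅ M(a + d)`, and more generally `B_a` of any free FI-module is free.

For generation, send `x ∈ V_T` to the summand of `inl : [a] ↪ [a] ⊔ T` in `(B_a V)_{[a] ⊔ T}`.
Given `W ⊆ B_a V`, the elements `x` landing in `W` form a sub-FI-module of `V`. It contains a
generator `v ∈ V_{[n]}` once `W` contains its shift in `(B_a V)_{[a + n]}`, and if it is all
of `V` then so is `W`: the summand of `f` in `(B_a V)_S` is the image of such elements under
`[a] ⊔ (S − f([a])) ↪ S`.
-/

theorem Fin.castAdd_ne_natAdd {m n : ℕ} (i : Fin m) (j : Fin n) :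
    Fin.castAdd n i ≠ Fin.natAdd m j := by
  simp only [ne_eq, Fin.ext_iff, Fin.val_castAdd, Fin.val_natAdd]
  omega

theorem sigmaFinsuppLequivDFinsupp_symm_single {K N ι : Type*} {η : ι → Type*} [Semiring K]
    [AddCommMonoid N] [Module K N] [DecidableEq ι] (i : ι) (j : η i) (n : N) :
    (sigmaFinsuppLequivDFinsupp K).symm (DFinsupp.single i (Finsupp.single j n)) =
      Finsupp.single (⟨i, j⟩ : Σ i, η i) n :=
  (LinearEquiv.symm_apply_eq _).2 (sigmaFinsuppEquivDFinsupp_single (⟨i, j⟩ : Σ i, η i) n).symm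

section

variable {a d : ℕ} {S T : FI}

theorem BFunctor_map_lof (V : FI ⥤ ModuleCat R) (g : S ⟶ T) (f : FI.obj' a ⟶ S)
    (x : V.obj (BComplement f)) :
    (BFunctor R a V).map g (lof R _ (fun f => V.obj (BComplement f)) f x) =
      lof R _ (fun f => V.obj (BComplement f)) (f ≫ g) (V.map (BRestrict g f) x) := by
  show (toModule R (FI.obj' a ⟶ S) _ fun f' =>
      (lof R (FI.obj' a ⟶ T) (fun f'' => V.obj (BComplement f'')) (f' ≫ g)).comp
        (V.map (BRestrict g f')).hom) (lof R _ (fun f' => V.obj (BComplement f')) f x) = _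
  rw [toModule_lof]
  rfl

theorem FreeFIModule_map_single {ι : Type} {ds : ι → ℕ} (g : S ⟶ T) (i : ι)
    (k : FI.obj' (ds i) ⟶ S) (r : R) :
    (FreeFIModule R ι ds).map g (Finsupp.single ⟨i, k⟩ r) = Finsupp.single ⟨i, k ≫ g⟩ r :=
  Finsupp.mapDomain_single

section FreeShift

def appendHom (f : FI.obj' a ⟶ S) (k : FI.obj' d ⟶ BComplement f) : FI.obj' (a + d) ⟶ S :=
  ⟨Fin.append f.1 (Subtype.val ∘ k.1),
    Fin.append_injective_iff.2 ⟨f.2, Subtype.val_injective.comp k.2, fun i j => (k.1 j).2 i⟩⟩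

theorem appendHom_comp (g : S ⟶ T) (f : FI.obj' a ⟶ S) (k : FI.obj' d ⟶ BComplement f) :
    appendHom (f ≫ g) (k ≫ BRestrict g f) = appendHom f k ≫ g := by
  refine Subtype.ext (funext fun x => Fin.addCases (fun i => ?_) (fun j => ?_) x)
  · exact (Fin.append_left _ _ i).trans (congrArg g.1 (Fin.append_left f.1 _ i).symm)
  · exact (Fin.append_right _ _ j).trans
      (congrArg g.1 (Fin.append_right f.1 (Subtype.val ∘ k.1) j).symm)

theorem sigma_eq_of_appendHom_eq {f f' : FI.obj' a ⟶ S} {k : FI.obj' d ⟶ BComplement f}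
    {k' : FI.obj' d ⟶ BComplement f'} (h : appendHom f k = appendHom f' k') :
    (⟨f, k⟩ : Σ f, FI.obj' d ⟶ BComplement f) = ⟨f', k'⟩ := by
  have h := congrArg Subtype.val h
  obtain rfl : f = f' := Subtype.ext (funext fun i =>
    (Fin.append_left f.1 _ i).symm.trans ((congrFun h _).trans (Fin.append_left f'.1 _ i)))
  obtain rfl : k = k' := Subtype.ext (funext fun j => Subtype.ext <|
    (Fin.append_right f.1 (Subtype.val ∘ k.1) j).symm.trans
      ((congrFun h _).trans (Fin.append_right f.1 (Subtype.val ∘ k'.1) j)))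
  rfl

theorem appendHom_surjective (h : FI.obj' (a + d) ⟶ S) :
    ∃ (f : FI.obj' a ⟶ S) (k : FI.obj' d ⟶ BComplement f), appendHom f k = h :=
  ⟨⟨fun i => h.1 (Fin.castAdd d i), h.2.comp (Fin.castAdd_injective a d)⟩,
    ⟨fun j => ⟨h.1 (Fin.natAdd a j), fun i e => Fin.castAdd_ne_natAdd i j (h.2 e)⟩,
      fun _ _ e => Fin.natAdd_injective d a (h.2 (congrArg Subtype.val e))⟩,
    Subtype.ext Fin.append_castAdd_natAdd⟩

variable (ι : Type) (ds : ι → ℕ)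

noncomputable def sigmaAppendHomEquiv (S : FI) :
    (Σ f : FI.obj' a ⟶ S, Σ i : ι, FI.obj' (ds i) ⟶ BComplement f) ≃
      Σ i : ι, FI.obj' (a + ds i) ⟶ S :=
  Equiv.ofBijective (fun p => ⟨p.2.1, appendHom p.1 p.2.2⟩) <| by
    constructor
    · rintro ⟨f, i, k⟩ ⟨f', i', k'⟩ h
      obtain ⟨rfl, h⟩ := Sigma.mk.inj_iff.mp h
      obtain ⟨rfl, h⟩ := Sigma.mk.inj_iff.mp (sigma_eq_of_appendHom_eq (eq_of_heq h))
      obtain rfl := eq_of_heq h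
      rfl
    · rintro ⟨i, h⟩
      obtain ⟨f, k, rfl⟩ := appendHom_surjective h
      exact ⟨⟨f, i, k⟩, rfl⟩

variable (R) in
noncomputable def BFunctorFreeEquiv (S : FI) :
    (BFunctor R a (FreeFIModule R ι ds)).obj S ≃ₗ[R]
      (FreeFIModule R ι (fun i => a + ds i)).obj S :=
  (sigmaFinsuppLequivDFinsupp R).symm ≪≫ₗ Finsupp.domLCongr (sigmaAppendHomEquiv ι ds S)

variable {ι ds}

theorem BFunctorFreeEquiv_lof_single (f : FI.obj' a ⟶ S) (i : ι)
    (k : FI.obj' (ds i) ⟶ BComplement f) (r : R) :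
    BFunctorFreeEquiv R ι ds S
        (lof R _ (fun f => (FreeFIModule R ι ds).obj (BComplement f)) f (Finsupp.single ⟨i, k⟩ r)) =
      Finsupp.single ⟨i, appendHom f k⟩ r := by
  erw [BFunctorFreeEquiv, LinearEquiv.trans_apply, sigmaFinsuppLequivDFinsupp_symm_single,
    Finsupp.domLCongr_single]
  rfl

variable (R ι ds) in
noncomputable def BFunctorFreeIso (a : ℕ) :
    BFunctor R a (FreeFIModule R ι ds) ≅ FreeFIModule R ι (fun i => a + ds i) :=
  NatIso.ofComponents (fun S => (BFunctorFreeEquiv R ι ds S).toModuleIso) fun {S T} g => by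
    refine ModuleCat.hom_ext (DirectSum.linearMap_ext R fun f =>
      Finsupp.lhom_ext' fun ⟨i, k⟩ => LinearMap.ext_ring ?_)
    show BFunctorFreeEquiv R ι ds T ((BFunctor R a (FreeFIModule R ι ds)).map g
        (lof R _ (fun f => (FreeFIModule R ι ds).obj (BComplement f)) f (Finsupp.single ⟨i, k⟩ 1))) =
      (FreeFIModule R ι _).map g (BFunctorFreeEquiv R ι ds S
        (lof R _ (fun f => (FreeFIModule R ι ds).obj (BComplement f)) f (Finsupp.single ⟨i, k⟩ 1)))
    erw [BFunctor_map_lof, FreeFIModule_map_single, BFunctorFreeEquiv_lof_single,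
      BFunctorFreeEquiv_lof_single]
    rw [FreeFIModule_map_single, appendHom_comp]

end FreeShift

section Generation

variable (V : FI ⥤ ModuleCat R) (a)

theorem BFunctor_map_lof_map {U : FI} (g : S ⟶ T) {f : FI.obj' a ⟶ S} {f' : FI.obj' a ⟶ T}
    (φ : U ⟶ BComplement f) (φ' : U ⟶ BComplement f') (hf : f ≫ g = f')
    (hφ : ∀ u, g.1 (φ.1 u).1 = (φ'.1 u).1) (x : V.obj U) :
    (BFunctor R a V).map g (lof R _ (fun f => V.obj (BComplement f)) f (V.map φ x)) =
      lof R _ (fun f => V.obj (BComplement f)) f' (V.map φ' x) := by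
  rw [BFunctor_map_lof, ← ConcreteCategory.comp_apply, ← V.map_comp]
  subst hf
  obtain rfl : φ ≫ BRestrict g f = φ' := Subtype.ext (funext fun u => Subtype.ext (hφ u))
  rfl

def sumObj (T : FI) : FI := FI.of (Fin a ⊕ T)

def inlHom (T : FI) : FI.obj' a ⟶ sumObj a T := ⟨Sum.inl, Sum.inl_injective⟩

def inrHom (T : FI) : T ⟶ BComplement (inlHom a T) :=
  ⟨fun t => ⟨Sum.inr t, fun _ => Sum.inl_ne_inr⟩,
    fun _ _ h => Sum.inr_injective (congrArg Subtype.val h)⟩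

def sumMapHom (g : S ⟶ T) : sumObj a S ⟶ sumObj a T :=
  ⟨Sum.map id g.1, Function.Injective.sumMap (fun _ _ h => h) g.2⟩

def complementSumHom (f : FI.obj' a ⟶ S) : sumObj a (BComplement f) ⟶ S :=
  ⟨Sum.elim f.1 Subtype.val, by
    rintro (i | s) (j | t) h
    exacts [congrArg _ (f.2 h), absurd h (t.2 i), absurd h.symm (s.2 j),
      congrArg _ (Subtype.ext h)]⟩

def castAddHom (n : ℕ) : FI.obj' a ⟶ FI.obj' (a + n) :=
  ⟨Fin.castAdd n, Fin.castAdd_injective a n⟩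

def natAddHom (n : ℕ) : FI.obj' n ⟶ BComplement (castAddHom a n) :=
  ⟨fun j => ⟨Fin.natAdd a j, fun i => Fin.castAdd_ne_natAdd i j⟩,
    fun _ _ h => Fin.natAdd_injective n a (congrArg Subtype.val h)⟩

def finSumFinHom (n : ℕ) : FI.obj' (a + n) ⟶ sumObj a (FI.obj' n) :=
  ⟨finSumFinEquiv.symm, finSumFinEquiv.symm.injective⟩

variable {V a}

def SubFIModule.unshift (W : SubFIModule (BFunctor R a V)) : SubFIModule V where
  carrier T := (W.carrier (sumObj a T)).comap
    ((lof R _ (fun f => V.obj (BComplement f)) (inlHom a T)) ∘ₗ (V.map (inrHom a T)).hom)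
  map_mem {T T'} g x hx := by
    have hmem := W.map_mem (sumMapHom a g) _ hx
    rwa [LinearMap.comp_apply, BFunctor_map_lof_map a V (sumMapHom a g) _ (g ≫ inrHom a T') rfl
      (fun _ => rfl), V.map_comp] at hmem

theorem SubFIModule.eq_top_of_unshift_eq_top (W : SubFIModule (BFunctor R a V))
    (h : ∀ T, W.unshift.carrier T = ⊤) (S : FI) : W.carrier S = ⊤ := by
  refine Submodule.eq_top_iff'.2 fun y => ?_
  induction y using DirectSum.induction_on with
  | zero => exact zero_mem _
  | add y z hy hz => exact add_mem hy hz
  | of f x =>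
    have hx : x ∈ W.unshift.carrier (BComplement f) := h _ ▸ Submodule.mem_top
    have hmem := W.map_mem (complementSumHom a f) _ hx
    rwa [LinearMap.comp_apply, BFunctor_map_lof_map a V (complementSumHom a f) (inrHom a _) (𝟙 _)
      (f' := f) rfl (fun _ => rfl), V.map_id] at hmem

def shiftGenerator {n : ℕ} (x : V.obj (FI.obj' n)) : (BFunctor R a V).obj (FI.obj' (a + n)) :=
  lof R _ (fun f => V.obj (BComplement f)) (castAddHom a n) (V.map (natAddHom a n) x)

theorem SubFIModule.mem_unshift_of_shiftGenerator_mem (W : SubFIModule (BFunctor R a V)) {n : ℕ}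
    {x : V.obj (FI.obj' n)} (hx : shiftGenerator x ∈ W.carrier (FI.obj' (a + n))) :
    x ∈ W.unshift.carrier (FI.obj' n) := by
  have hmem := W.map_mem (finSumFinHom a n) _ hx
  rwa [shiftGenerator, BFunctor_map_lof_map a V (finSumFinHom a n) (natAddHom a n) (inrHom a _)
    (Subtype.ext (funext finSumFinEquiv_symm_apply_castAdd))
    (fun j => finSumFinEquiv_symm_apply_natAdd j)] at hmem

def FIModuleGeneratedBy (V : FI ⥤ ModuleCat R) {ι : Type} (n : ι → ℕ)
    (v : ∀ i, V.obj (FI.obj' (n i))) : Prop :=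
  ∀ W : SubFIModule V, (∀ i, v i ∈ W.carrier (FI.obj' (n i))) → ∀ S, W.carrier S = ⊤

theorem FIModuleGeneratedBy.BFunctor {ι : Type} {n : ι → ℕ} {v : ∀ i, V.obj (FI.obj' (n i))}
    (h : FIModuleGeneratedBy V n v) :
    FIModuleGeneratedBy (BFunctor R a V) (fun i => a + n i) (fun i => shiftGenerator (v i)) :=
  fun W hW => W.eq_top_of_unshift_eq_top
    (h W.unshift fun i => W.mem_unshift_of_shiftGenerator_mem (hW i))

end Generation

end

/-- **Ordered negative shifts of free FI-modules** (Church–Ellenberg–Farb–Nagpal,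
Lemma 2.18 and Corollary 2.19). For any `d, a ≥ 0` there is an isomorphism of FI-modules
`B_a M(d) ≅ M(a + d)`; consequently, if `V` is finitely generated (resp. generated in
degree ≤ d) then `B_a V` is finitely generated (resp. generated in degree ≤ a + d). -/
theorem BFunctor_of_free_and_generation
    (R : Type) [CommRing R] (a : ℕ) :
    (∀ d : ℕ, Nonempty (BFunctor R a (MFI R d) ≅ MFI R (a + d))) ∧
    (∀ V : FI ⥤ ModuleCat R,
      (FIModuleFG V → FIModuleFG (BFunctor R a V)) ∧
      (∀ d : ℕ, FIModuleGenLE V d → FIModuleGenLE (BFunctor R a V) (a + d))) := by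
  refine ⟨fun d => ⟨BFunctorFreeIso R PUnit (fun _ => d) a⟩, fun V => ⟨?_, fun d => ?_⟩⟩
  · rintro ⟨k, n, v, hv⟩
    exact ⟨k, _, _, FIModuleGeneratedBy.BFunctor hv⟩
  · rintro ⟨ι, n, hn, v, hv⟩
    exact ⟨ι, _, fun i => Nat.add_le_add_left (hn i) a, _, FIModuleGeneratedBy.BFunctor hv⟩
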